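/- arXiv:2311.00077 — 5 statements merged into one kernel-verified Lean document; each statement's English description precedes it below -/
import Mathlib

section
/- Let A = ⟨Q, Σ, δ⟩ be a deterministic finite automaton, S a proper non-empty subset of Q, and w a word over Σ. Then there exists a subset P ⊆ Q with |P| > |S| and P·w = S if and only if excl(w) ∩ S = ∅ and dupl(w) ∩ S ≠ ∅, where excl(w) = Q \ Q·w and dupl(w) = {p ∈ Q : p = q₁·w = q₂·w for some q₁ ≠ q₂}. -/
/-! The direction `⇒` is the pigeonhole principle applied to `w : P → S`. For `⇐`, take `P` to
be the full preimage of `S` under `w`: it maps onto `S` because `S` avoids `excl(w)`, and it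
is strictly larger than `S` because `w` identifies two of its states above a point of
`dupl(w) ∩ S`. -/

/-- The action of a word (list of letters) on a state, left to right. -/
def actWord {Q σ : Type*} (δ : Q → σ → Q) (q : Q) (w : List σ) : Q :=
  w.foldl δ q

open Finset

section

variable {α β : Type*} [DecidableEq β] {f : α → β}

theorem Finset.image_filter_univ_mem_eq [Fintype α] {S : Finset β} (hS : ↑S ⊆ Set.range f) :
    (univ.filter (f · ∈ S)).image f = S :=
  coe_injective <| by
    simp only [coe_image, coe_filter, mem_univ, true_and]
    exact Set.image_preimage_eq_of_subset hS

theorem Finset.card_image_lt_of_not_injOn {P : Finset α} (hf : ¬ Set.InjOn f P) :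
    #(P.image f) < #P :=
  (card_image_le).lt_of_ne (mt card_image_iff.mp hf)

theorem Finset.exists_card_lt_image_eq_iff [Fintype α] {S : Finset β} :
    (∃ P : Finset α, #S < #P ∧ P.image f = S) ↔
      ↑S ⊆ Set.range f ∧ ∃ x y, x ≠ y ∧ f x = f y ∧ f x ∈ S := by
  constructor
  · rintro ⟨P, hcard, rfl⟩
    refine ⟨by simp, ?_⟩
    obtain ⟨x, hx, y, -, hxy, hfxy⟩ :=
      exists_ne_map_eq_of_card_lt_of_maps_to hcard fun x hx => mem_image_of_mem f hx
    exact ⟨x, y, hxy, hfxy, mem_image_of_mem f hx⟩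
  · rintro ⟨hS, x, y, hxy, hfxy, hxS⟩
    refine ⟨univ.filter (f · ∈ S), ?_, image_filter_univ_mem_eq hS⟩
    have hnotInj : ¬ Set.InjOn f (univ.filter (f · ∈ S) : Finset α) := fun hinj =>
      hxy <| hinj (by simpa using hxS) (by simpa [← hfxy] using hxS) hfxy
    simpa [image_filter_univ_mem_eq hS] using card_image_lt_of_not_injOn hnotInj

end

theorem stmt0_general {Q σ : Type*} [Fintype Q] [DecidableEq Q]
    (δ : Q → σ → Q) (S : Finset Q)
    (w : List σ) :
    (∃ P : Finset Q, S.card < P.card ∧ P.image (fun q => actWord δ q w) = S) ↔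
      ((Set.range fun q => actWord δ q w)ᶜ ∩ (S : Set Q) = ∅ ∧
        {p : Q | ∃ q₁ q₂ : Q, q₁ ≠ q₂ ∧ actWord δ q₁ w = p ∧ actWord δ q₂ w = p}
          ∩ (S : Set Q) ≠ ∅) := by
  rw [exists_card_lt_image_eq_iff, ← Set.nonempty_iff_ne_empty, ← Set.disjoint_iff_inter_eq_empty,
    Set.disjoint_compl_left_iff_subset]
  refine and_congr_right fun _ => ⟨?_, ?_⟩
  · rintro ⟨q₁, q₂, hq, heq, hS⟩
    exact ⟨_, ⟨q₁, q₂, hq, rfl, heq.symm⟩, hS⟩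
  · rintro ⟨p, ⟨q₁, q₂, hq, rfl, heq⟩, hS⟩
    exact ⟨q₁, q₂, hq, heq.symm, hS⟩

/-- Lemma 1 (expansion criterion): a word `w` expands a proper non-empty subset `S`
(i.e., `S` is the image of a strictly larger set) iff `excl(w) ∩ S = ∅` and
`dupl(w) ∩ S ≠ ∅`. -/
theorem stmt0 {Q σ : Type*} [Fintype Q] [DecidableEq Q]
    (δ : Q → σ → Q) (S : Finset Q) (hS : S.Nonempty) (hS' : S ≠ Finset.univ)
    (w : List σ) :
    (∃ P : Finset Q, S.card < P.card ∧ P.image (fun q => actWord δ q w) = S) ↔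
      ((Set.range fun q => actWord δ q w)ᶜ ∩ (S : Set Q) = ∅ ∧
        {p : Q | ∃ q₁ q₂ : Q, q₁ ≠ q₂ ∧ actWord δ q₁ w = p ∧ actWord δ q₂ w = p}
          ∩ (S : Set Q) ≠ ∅) :=
  stmt0_general δ S w
end

section
/- Let A = ⟨Q, Σ⟩ be a DFA with n states. Suppose that for every proper non-empty subset S ⊂ Q there exist a word w of length at most n and a subset P ⊆ Q with |P| > |S| and P·w = S. Then for every k with 0 < k ≤ n, every subset of Q with k states is reachable by a word of length at most n(n−k), i.e., equals Q·v for some word v with |v| ≤ n(n−k). -/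
/-! Induct on `n - |S|`. A proper non-empty `S` expands to some `P` with `|P| > |S|` and
`P·w = S`; if `Q·v = P` with `|v| ≤ n (n - |P|)`, then `Q·(v w) = S` and
`|v w| ≤ n (n - |P|) + n ≤ n (n - |S|)` because `|S| < |P| ≤ n`. -/

section Reachability

variable {Q σ : Type*}

theorem actWord_append (δ : Q → σ → Q) (q : Q) (v w : List σ) :
    actWord δ q (v ++ w) = actWord δ (actWord δ q v) w :=
  List.foldl_append

variable [Fintype Q] [DecidableEq Q]

def ReachableWithin (δ : Q → σ → Q) (ℓ : ℕ) (S : Finset Q) : Prop :=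
  ∃ v : List σ, v.length ≤ ℓ ∧ Finset.univ.image (fun q => actWord δ q v) = S

theorem reachableWithin_univ (δ : Q → σ → Q) (ℓ : ℕ) :
    ReachableWithin δ ℓ (Finset.univ : Finset Q) :=
  ⟨[], Nat.zero_le ℓ, by simp [actWord]⟩

theorem ReachableWithin.mono {δ : Q → σ → Q} {ℓ ℓ' : ℕ} {S : Finset Q}
    (hS : ReachableWithin δ ℓ S) (hℓ : ℓ ≤ ℓ') : ReachableWithin δ ℓ' S :=
  let ⟨v, hv, hvS⟩ := hS
  ⟨v, hv.trans hℓ, hvS⟩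

theorem ReachableWithin.image_actWord {δ : Q → σ → Q} {ℓ : ℕ} {P : Finset Q}
    (hP : ReachableWithin δ ℓ P) (w : List σ) :
    ReachableWithin δ (ℓ + w.length) (P.image fun q => actWord δ q w) := by
  obtain ⟨v, hv, rfl⟩ := hP
  refine ⟨v ++ w, by simpa using hv, ?_⟩
  simp only [Finset.image_image, Function.comp_def, actWord_append]

end Reachability

/-- Lemma 2: if in a DFA with `n` states every proper non-empty subset is
`n`-expandable, then every subset with `k > 0` states is reachable by a word of
length at most `n * (n - k)`. -/
theorem stmt1 {Q σ : Type*} [Fintype Q] [DecidableEq Q]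
    (δ : Q → σ → Q) (n : ℕ) (hn : n = Fintype.card Q)
    (hexp : ∀ S : Finset Q, S.Nonempty → S ≠ Finset.univ →
      ∃ w : List σ, w.length ≤ n ∧
        ∃ P : Finset Q, S.card < P.card ∧ P.image (fun q => actWord δ q w) = S) :
    ∀ S : Finset Q, S.Nonempty →
      ∃ v : List σ, v.length ≤ n * (n - S.card) ∧
        Finset.univ.image (fun q => actWord δ q v) = S := by
  suffices h : ∀ m, ∀ S : Finset Q, S.Nonempty → n - S.card = m →
      ReachableWithin δ (n * (n - S.card)) S from fun S hS => h _ S hS rfl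
  intro m
  induction m using Nat.strong_induction_on with
  | _ m ih =>
    intro S hS hm
    by_cases huniv : S = Finset.univ
    · exact huniv ▸ reachableWithin_univ δ _
    obtain ⟨w, hw, P, hSP, rfl⟩ := hexp S hS huniv
    have hPn : P.card ≤ n := hn ▸ P.card_le_univ
    have hP : ReachableWithin δ (n * (n - P.card)) P :=
      ih _ (by omega) P (Finset.card_pos.mp (by omega)) rfl
    refine (hP.image_actWord w).mono ?_
    calc n * (n - P.card) + w.length ≤ n * (n - P.card + 1) := by rw [mul_add_one]; omega
      _ ≤ n * (n - (P.image fun q => actWord δ q w).card) := Nat.mul_le_mul_left n (by omega)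
end

section
/- Let A = ⟨ℤₙ, {a, b}⟩ be a standardized DFA with orbit Orb(d) = {d₀, …, d_{ℓ−1}} and orbit subgroup H₀ (the subgroup of (ℤₙ, ⊕) generated by Orb(d)). In the restricted orbit digraph R(A) — the subgraph of the Cayley digraph Cay(ℤₙ, Orb(d)) retaining only the short edges q → q ⊕ d_s with q + s < n (where d_s = d·aˢ) — two vertices lie in the same strongly connected component if and only if they lie in the same coset of H₀. In other words, the strongly connected components of R(A) have exactly the cosets of H₀ as their vertex sets. -/
/-!
Every edge adds an element of `Orb(d)`, so strongly connected vertices differ by an element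
of `H₀`. Conversely, call `x` reachable if every `w` reaches `w + x`; these translations
form a submonoid, hence (`ℤₙ` being finite) a subgroup, and it suffices to show that each
`d_s` is reachable. The states `0, d₀, …, d_{ℓ-1}` are pairwise distinct, because `a` is
injective off `r` and `0` is not in its image. By induction on `s`, the `s + 1` reachable
translations `0, d₀, …, d_{s-1}` move any `w` into a set of `s + 1` distinct vertices, one of
which has value below `n - s` and therefore carries the short edge by `d_s`.
-/

open Relation

section Translations

variable {G : Type*} (edge : G → G → Prop)

def reachableTranslations [AddMonoid G] : AddSubmonoid G where
  carrier := {x | ∀ w, ReflTransGen edge w (w + x)}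
  zero_mem' w := by simpa using ReflTransGen.refl
  add_mem' {x _} hx hy w := by simpa only [add_assoc] using (hx w).trans (hy (w + x))

theorem AddSubmonoid.neg_mem_of_finite [AddGroup G] [Finite G] {M : AddSubmonoid G} {x : G}
    (hx : x ∈ M) : -x ∈ M :=
  AddSubmonoid.multiples_le.mpr hx <|
    mem_multiples_iff_mem_zmultiples.mpr (neg_mem (AddSubgroup.mem_zmultiples x))

theorem closure_le_reachableTranslations [AddGroup G] [Finite G] {S : Set G}
    (hS : S ⊆ reachableTranslations edge) :
    (AddSubgroup.closure S).toAddSubmonoid ≤ reachableTranslations edge := by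
  rw [AddSubgroup.closure_toAddSubmonoid_of_finite]
  exact AddSubmonoid.closure_le.mpr hS

theorem mem_reachableTranslations_of_forall_exists_edge [AddCommGroup G] [Finite G] {d : G}
    (h : ∀ w, ∃ x ∈ reachableTranslations edge, edge (w + x) (w + x + d)) :
    d ∈ reachableTranslations edge := by
  intro w
  obtain ⟨x, hx, hedge⟩ := h w
  have hback := AddSubmonoid.neg_mem_of_finite hx (w + x + d)
  rw [show w + x + d + -x = w + d by abel] at hback
  exact ((hx w).tail hedge).trans hback

theorem sub_mem_of_reflTransGen [AddGroup G] {H : AddSubgroup G}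
    (hH : ∀ u v, edge u v → v - u ∈ H) {u v : G} (huv : ReflTransGen edge u v) : v - u ∈ H := by
  induction huv with
  | refl => simp
  | tail _ hbc ih => simpa using add_mem (hH _ _ hbc) ih

end Translations

theorem injOn_compl_singleton_of_range_eq_compl {α : Type*} [Finite α] {f : α → α} {z r c : α}
    (hf : Set.range f = {z}ᶜ) (hrc : r ≠ c) (hfrc : f r = f c) : Set.InjOn f {r}ᶜ := by
  classical
  have := Fintype.ofFinite α
  have himage : (Finset.univ.erase r).image f = Finset.univ.erase z := by
    ext y
    have hy : y ∈ Set.range f ↔ y ≠ z := by rw [hf]; rfl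
    simp only [Finset.mem_image, Finset.mem_erase, Finset.mem_univ, and_true, ← hy]
    constructor
    · rintro ⟨x, -, rfl⟩; exact ⟨x, rfl⟩
    · rintro ⟨x, rfl⟩
      by_cases hx : x = r
      · exact ⟨c, hrc.symm, by rw [hx, hfrc]⟩
      · exact ⟨x, hx, rfl⟩
  have hinj := Finset.injOn_of_card_image_eq (f := f) (s := Finset.univ.erase r) (by
    rw [himage, Finset.card_erase_of_mem (Finset.mem_univ _),
      Finset.card_erase_of_mem (Finset.mem_univ _)])
  rwa [Finset.coe_erase, Finset.coe_univ, ← Set.compl_eq_univ_sdiff] at hinj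

theorem injOn_iterate_of_notMem_range {α : Type*} {f : α → α} {S : Set α} {x : α} {m : ℕ}
    (hf : Set.InjOn f S) (hx : x ∉ Set.range f) (hS : ∀ k < m, f^[k] x ∈ S) :
    Set.InjOn (fun k => f^[k] x) (Set.Iic m) := by
  have hne : ∀ i j, i < j → j ≤ m → f^[i] x ≠ f^[j] x := by
    intro i
    induction i with
    | zero =>
      intro j hij _ heq
      obtain ⟨j, rfl⟩ := Nat.exists_eq_add_of_lt hij
      exact hx ⟨f^[j] x, by simpa [Function.iterate_succ_apply'] using heq.symm⟩
    | succ i ih =>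
      intro j hij hjm heq
      obtain ⟨j, rfl⟩ : ∃ j', j = j' + 1 := ⟨j - 1, by omega⟩
      simp only [Function.iterate_succ_apply'] at heq
      exact ih j (by omega) (by omega) (hf (hS i (by omega)) (hS j (by omega)) heq)
  intro i hi j hj heq
  rcases lt_trichotomy i j with h | h | h
  · exact absurd heq (hne i j h hj)
  · exact h
  · exact absurd heq.symm (hne j i h hi)

theorem ZMod.exists_mem_val_add_lt {n : ℕ} [NeZero n] {F : Finset (ZMod n)} {m : ℕ}
    (hm : m < F.card) : ∃ x ∈ F, x.val + m < n := by
  by_contra! h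
  have hsub : F.image ZMod.val ⊆ Finset.Ico (n - m) n := fun y hy => by
    obtain ⟨x, hx, rfl⟩ := Finset.mem_image.mp hy
    have := h x hx
    have := ZMod.val_lt x
    simp only [Finset.mem_Ico]
    omega
  have := Finset.card_le_card hsub
  rw [Finset.card_image_of_injective _ (ZMod.val_injective n), Nat.card_Ico] at this
  omega

/-- From every vertex `w` some vertex of the `(s+1)`-element set `w + {e 0, …, e s}` has value
at most `n - 1 - s`, so it carries the short edge by `e (s + 1)`. -/
theorem ZMod.succ_mem_reachableTranslations {n : ℕ} [NeZero n] {edge : ZMod n → ZMod n → Prop}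
    {e : ℕ → ZMod n} {ℓ : ℕ} (he0 : e 0 = 0) (he : Set.InjOn e (Set.Iio ℓ))
    (hedge : ∀ w s, s < ℓ → w.val + s < n → edge w (w + e (s + 1))) :
    ∀ s < ℓ, e (s + 1) ∈ reachableTranslations edge := by
  intro s
  induction s using Nat.strong_induction_on with
  | _ s ih =>
    intro hs
    set F := (Finset.range (s + 1)).image e
    have hF : ∀ x ∈ F, x ∈ reachableTranslations edge := by
      simp only [F, Finset.mem_image, Finset.mem_range]
      rintro _ ⟨_ | t, ht, rfl⟩
      · exact he0 ▸ zero_mem _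
      · exact ih t (by omega) (by omega)
    have hcard : F.card = s + 1 := by
      rw [Finset.card_image_of_injOn (he.mono fun t ht => ?_), Finset.card_range]
      simp only [Finset.coe_range, Set.mem_Iio] at ht ⊢
      omega
    refine mem_reachableTranslations_of_forall_exists_edge edge fun w => ?_
    obtain ⟨_, hy, hval⟩ := ZMod.exists_mem_val_add_lt (F := F.image (w + ·)) (m := s)
      (by rw [Finset.card_image_of_injective _ (add_right_injective w), hcard]; omega)
    obtain ⟨x, hx, rfl⟩ := Finset.mem_image.mp hy
    exact ⟨x, hF x hx, hedge _ s hs hval⟩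

theorem stmt6_general (n : ℕ) (hn : 2 ≤ n) (a : ZMod n → ZMod n)
    -- standardized: the unique state excluded by `a` is 0
    (hexcl : Set.range a = {(0 : ZMod n)}ᶜ)
    -- `r ≠ 0` is the second preimage of `d`
    (r : ZMod n) (hr : r ≠ 0) (hra : a r = a 0)
    -- `ℓ` is the least positive integer with `d·a^(ℓ-1) = r`
    (ℓ : ℕ)
    (hℓmin : ∀ m : ℕ, 1 ≤ m → a^[m - 1] (a 0) = r → ℓ ≤ m)
    -- the restricted orbit digraph: short edges `q → q ⊕ d_s` with `q + s < n`
    (edge : ZMod n → ZMod n → Prop)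
    (hedge : ∀ u v : ZMod n,
      edge u v ↔ ∃ s : ℕ, s < ℓ ∧ v = u + a^[s] (a 0) ∧ u.val + s < n)
    (u v : ZMod n) :
    (Relation.ReflTransGen edge u v ∧ Relation.ReflTransGen edge v u) ↔
      u - v ∈ AddSubgroup.closure {x : ZMod n | ∃ s : ℕ, s < ℓ ∧ x = a^[s] (a 0)} := by
  have : NeZero n := ⟨by omega⟩
  have hzero : (0 : ZMod n) ∉ Set.range a := by simp [hexcl]
  have hinj : Set.InjOn a {r}ᶜ := injOn_compl_singleton_of_range_eq_compl hexcl hr hra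
  have horbit : Set.InjOn (fun k => a^[k] 0) (Set.Iio ℓ) := by
    refine (injOn_iterate_of_notMem_range hinj hzero (m := ℓ - 1) fun k hk => ?_).mono
      fun k hk => by simp only [Set.mem_Iio, Set.mem_Iic] at hk ⊢; omega
    rcases k with _ | k
    · exact hr.symm
    · intro hkr
      have := hℓmin (k + 1) le_add_self (by simpa [Function.iterate_succ_apply] using hkr)
      omega
  set S := {x : ZMod n | ∃ s : ℕ, s < ℓ ∧ x = a^[s] (a 0)}
  have hgen : S ⊆ reachableTranslations edge := by
    rintro _ ⟨s, hs, rfl⟩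
    rw [SetLike.mem_coe]
    simpa only [Function.iterate_succ_apply] using
      ZMod.succ_mem_reachableTranslations (edge := edge) (e := fun k => a^[k] 0) rfl horbit
        (fun w t ht hw => (hedge _ _).2 ⟨t, ht, by simp only [Function.iterate_succ_apply], hw⟩)
        s hs
  constructor
  · rintro ⟨-, hvu⟩
    exact sub_mem_of_reflTransGen edge
      (fun p q hpq => by
        obtain ⟨s, hs, rfl, -⟩ := (hedge p q).1 hpq
        simpa using AddSubgroup.subset_closure (k := S) ⟨s, hs, rfl⟩) hvu
  · intro h
    have hreach := closure_le_reachableTranslations edge hgen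
    have hvu : v - u ∈ reachableTranslations edge := hreach (by simpa using neg_mem h)
    exact ⟨by simpa using hvu u, by simpa using hreach h v⟩

/-- Proposition (restricted orbit digraph): in a standardized DFA `⟨ℤₙ, {a, b}⟩`, the
strongly connected components of the restricted orbit digraph (only short edges
`q → q ⊕ d_s` with `q + s < n` are kept) have exactly the cosets of the orbit
subgroup `H₀` as their vertex sets. -/
theorem stmt6 (n : ℕ) (hn : 2 ≤ n) (a : ZMod n → ZMod n)
    -- standardized: the unique state excluded by `a` is 0
    (hexcl : Set.range a = {(0 : ZMod n)}ᶜ)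
    -- standardized: the unique duplicated state of `a` is `d = a 0`
    (hdupl : ∀ p : ZMod n,
      (∃ q₁ q₂ : ZMod n, q₁ ≠ q₂ ∧ a q₁ = p ∧ a q₂ = p) ↔ p = a 0)
    -- `r ≠ 0` is the second preimage of `d`
    (r : ZMod n) (hr : r ≠ 0) (hra : a r = a 0)
    -- `ℓ` is the least positive integer with `d·a^(ℓ-1) = r`
    (ℓ : ℕ) (hℓ1 : 1 ≤ ℓ) (hℓr : a^[ℓ - 1] (a 0) = r)
    (hℓmin : ∀ m : ℕ, 1 ≤ m → a^[m - 1] (a 0) = r → ℓ ≤ m)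
    -- the restricted orbit digraph: short edges `q → q ⊕ d_s` with `q + s < n`
    (edge : ZMod n → ZMod n → Prop)
    (hedge : ∀ u v : ZMod n,
      edge u v ↔ ∃ s : ℕ, s < ℓ ∧ v = u + a^[s] (a 0) ∧ u.val + s < n)
    (u v : ZMod n) :
    (Relation.ReflTransGen edge u v ∧ Relation.ReflTransGen edge v u) ↔
      u - v ∈ AddSubgroup.closure {x : ZMod n | ∃ s : ℕ, s < ℓ ∧ x = a^[s] (a 0)} :=
  stmt6_general n hn a hexcl r hr hra ℓ hℓmin edge hedge u v
end

section
/- Let A = ⟨ℤₙ, {a, b}⟩ be a standardized DFA with orbit subgroup H₀. Every non-empty subset S of ℤₙ that is not a union of cosets of H₀ is n-expandable: there exists a word w over {a, b} of length at most n and a subset P ⊆ ℤₙ with |P| > |S| and P·w = S. Moreover, w can be chosen of the form a^{s+1} b^q with 0 ≤ s ≤ ℓ−1, q ∈ ℤₙ, and q + s + 1 ≤ n. -/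
/-- The action of a word on a state: `true` acts as the letter `a`, `false` acts as
the letter `b : q ↦ q + 1`. -/
def actAB (n : ℕ) (a : ZMod n → ZMod n) (q : ZMod n) (w : List Bool) : ZMod n :=
  w.foldl (fun p l => if l then a p else p + 1) q

open Finset
open scoped Pointwise

/-!
Off `0` the letter `a` permutes the nonzero states, and `d = a 0 = a r` is the only state with
two preimages (and `0` has none). Hence for every `T` the preimage of `T` under `a^(s+1)` has
`|T| - [0 ∈ T] + [a^s d ∈ T]` elements, and `P = (a^(s+1))⁻¹ (S - q)` expands `S` through
`a^(s+1) b^q` as soon as `q ∉ S` and `a^s d + q ∈ S`.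

Take `s` minimal such that `d_s = a^s d` is not a period of `S`; it exists because `S` is not a
union of cosets of `H₀`. Since `|S + d_s| = |S|`, some `q₀ ∉ S` has `d_s + q₀ ∈ S`, and as
`0, d_0, …, d_(s-1)` are `s + 1` distinct periods, every `q₀ + d_t` qualifies too. The one of
least value `q` satisfies `q + s + 1 ≤ n`.
-/

section DuplicatingMap

variable {α : Type*} {f : α → α} {z r : α}

theorem apply_ne_of_range_eq_compl (hrange : Set.range f = {z}ᶜ) (x : α) : f x ≠ z := by
  have : f x ∈ ({z}ᶜ : Set α) := hrange ▸ Set.mem_range_self x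
  simpa using this

theorem mapsTo_compl_of_range_eq_compl (hrange : Set.range f = {z}ᶜ) :
    Set.MapsTo f {z}ᶜ {z}ᶜ :=
  fun x _ => apply_ne_of_range_eq_compl hrange x

theorem surjOn_compl_of_range_eq_compl (hrange : Set.range f = {z}ᶜ) (hr : r ≠ z)
    (hfr : f r = f z) : Set.SurjOn f {z}ᶜ {z}ᶜ := by
  intro y hy
  obtain ⟨x, rfl⟩ : y ∈ Set.range f := hrange ▸ hy
  by_cases hx : x = z
  · exact ⟨r, hr, hx ▸ hfr⟩
  · exact ⟨x, hx, rfl⟩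

theorem iterate_apply_apply_ne_of_range_eq_compl (hrange : Set.range f = {z}ᶜ) (t : ℕ) :
    f^[t] (f z) ≠ z := by
  rw [← Function.iterate_succ_apply, Function.iterate_succ_apply']
  exact apply_ne_of_range_eq_compl hrange _

variable [Fintype α] [DecidableEq α]

theorem injOn_compl_of_range_eq_compl (hrange : Set.range f = {z}ᶜ) (hr : r ≠ z)
    (hfr : f r = f z) : Set.InjOn f {z}ᶜ := by
  simpa using Finset.injOn_of_surjOn_of_card_le (s := {z}ᶜ) (t := {z}ᶜ) f
    (by simpa using mapsTo_compl_of_range_eq_compl hrange)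
    (by simpa using surjOn_compl_of_range_eq_compl hrange hr hfr) le_rfl

theorem card_filter_apply_mem_add (hrange : Set.range f = {z}ᶜ) (hr : r ≠ z)
    (hfr : f r = f z) (T : Finset α) :
    #{x | f x ∈ T} + (if z ∈ T then 1 else 0) = #T + (if f z ∈ T then 1 else 0) := by
  have hoff : #{x ∈ {x | f x ∈ T} | ¬x = z} = #(T.erase z) := by
    rw [← card_image_of_injOn (f := f)]
    · congr 1
      ext y
      simp only [mem_image, mem_filter, mem_univ, true_and, mem_erase]
      constructor
      · rintro ⟨x, ⟨hxT, -⟩, rfl⟩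
        exact ⟨apply_ne_of_range_eq_compl hrange x, hxT⟩
      · rintro ⟨hyz, hyT⟩
        obtain ⟨x, hxz, rfl⟩ := surjOn_compl_of_range_eq_compl hrange hr hfr hyz
        exact ⟨x, ⟨hyT, hxz⟩, rfl⟩
    · exact (injOn_compl_of_range_eq_compl hrange hr hfr).mono (by simp [Set.subset_def])
  have hz : #{x ∈ {x | f x ∈ T} | x = z} = if f z ∈ T then 1 else 0 := by
    rw [filter_eq']
    split_ifs <;> simp_all
  have herase : #(T.erase z) + (if z ∈ T then 1 else 0) = #T := by
    split_ifs with h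
    exacts [card_erase_add_one h, by simp [erase_eq_of_notMem h]]
  rw [← card_filter_add_card_filter_not (s := {x | f x ∈ T}) (· = z), hz, hoff, ← herase]
  ring

theorem card_filter_iterate_apply_mem_add (hrange : Set.range f = {z}ᶜ) (hr : r ≠ z)
    (hfr : f r = f z) (k : ℕ) (T : Finset α) :
    #{x | f^[k + 1] x ∈ T} + (if z ∈ T then 1 else 0) =
      #T + (if f^[k] (f z) ∈ T then 1 else 0) := by
  induction k with
  | zero => exact card_filter_apply_mem_add hrange hr hfr T
  | succ k ih =>
    set V := univ.filter fun x => f^[k + 1] x ∈ T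
    have hstep := card_filter_apply_mem_add hrange hr hfr V
    have hpre : univ.filter (fun x => f x ∈ V) = univ.filter fun x => f^[k + 1 + 1] x ∈ T := by
      ext x
      simp only [V, mem_filter, mem_univ, true_and, ← Function.iterate_succ_apply]
    have hz : z ∈ V ↔ f^[k] (f z) ∈ T := by
      simp only [V, mem_filter, mem_univ, true_and]
      rw [Function.iterate_succ_apply]
    have hfz : f z ∈ V ↔ f^[k + 1] (f z) ∈ T := by
      simp only [V, mem_filter, mem_univ, true_and]
    rw [hpre] at hstep
    simp only [hz, hfz] at hstep
    split_ifs at hstep ih ⊢ <;> omega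

theorem image_filter_iterate_apply_mem (hrange : Set.range f = {z}ᶜ) (hr : r ≠ z)
    (hfr : f r = f z) (k : ℕ) {T : Finset α} (hzT : z ∉ T) :
    image f^[k] {x | f^[k] x ∈ T} = T := by
  ext y
  simp only [mem_image, mem_filter, mem_univ, true_and]
  refine ⟨fun ⟨x, hx, hxy⟩ => hxy ▸ hx, fun hy => ?_⟩
  obtain ⟨x, -, rfl⟩ := (surjOn_compl_of_range_eq_compl hrange hr hfr).iterate k
    (show y ≠ z from fun h => hzT (h ▸ hy))
  exact ⟨x, hy, rfl⟩

theorem injOn_iterate_apply_apply (hrange : Set.range f = {z}ᶜ) (hr : r ≠ z) (hfr : f r = f z)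
    {ℓ : ℕ} (hmin : ∀ m : ℕ, 1 ≤ m → f^[m - 1] (f z) = r → ℓ ≤ m) :
    Set.InjOn (fun t => f^[t] (f z)) (Set.Iio ℓ) := by
  have hinj := injOn_compl_of_range_eq_compl hrange hr hfr
  have hne := iterate_apply_apply_ne_of_range_eq_compl hrange
  suffices h : ∀ i m, i + m + 1 < ℓ → f^[i] (f z) ≠ f^[i + m + 1] (f z) by
    intro i hi j hj hij
    simp only [Set.mem_Iio] at hi hj
    by_contra hij_ne
    rcases Nat.lt_or_gt_of_ne hij_ne with hlt | hlt
    · obtain ⟨m, rfl⟩ := Nat.exists_eq_add_of_lt hlt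
      exact h i m hj hij
    · obtain ⟨m, rfl⟩ := Nat.exists_eq_add_of_lt hlt
      exact h j m hi hij.symm
  intro i m hℓ heq
  rw [add_assoc, Function.iterate_add_apply] at heq
  have hfz : f z = f^[m + 1] (f z) := hinj.iterate (mapsTo_compl_of_range_eq_compl hrange) i
    (apply_ne_of_range_eq_compl hrange z) (hne _) heq
  rw [Function.iterate_succ_apply'] at hfz
  have hrm : r = f^[m] (f z) := hinj hr (hne m) (hfr.trans hfz)
  have := hmin (m + 1) (by omega) (by simpa using hrm.symm)
  omega

end DuplicatingMap

section Stabilizer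

variable {G : Type*} [AddGroup G] [DecidableEq G] {S : Finset G}

open AddAction

theorem add_mem_iff_of_mem_stabilizer {h : G} (hh : h ∈ stabilizer G S) (x : G) :
    h + x ∈ S ↔ x ∈ S := by
  rw [mem_stabilizer_iff] at hh
  conv_lhs => rw [← hh]
  exact vadd_mem_vadd_finset_iff h

theorem exists_notMem_stabilizer_of_not_forall {D : Set G}
    (hS : ¬ ∀ x ∈ S, ∀ y : G, y - x ∈ AddSubgroup.closure D → y ∈ S) :
    ∃ d ∈ D, d ∉ stabilizer G S := by
  by_contra! hD
  refine hS fun x hx y hy => ?_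
  have hyx : y - x ∈ stabilizer G S := AddSubgroup.closure_le _ |>.2 hD hy
  simpa using (add_mem_iff_of_mem_stabilizer hyx x).2 hx

theorem exists_notMem_add_mem_of_notMem_stabilizer {d : G} (hd : d ∉ stabilizer G S) :
    ∃ q ∉ S, d + q ∈ S := by
  have hsub : ¬ S ⊆ d +ᵥ S := fun hsub =>
    hd (mem_stabilizer_iff.2 (eq_of_subset_of_card_le hsub (card_vadd_finset d S).le).symm)
  obtain ⟨y, hyS, hy⟩ := not_subset.1 hsub
  exact ⟨-d + y, neg_vadd_mem_iff.not.2 hy, by simpa using hyS⟩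

theorem exists_min_notMem_stabilizer {d : ℕ → G} {ℓ : ℕ}
    (hS : ¬ ∀ x ∈ S, ∀ y : G,
      y - x ∈ AddSubgroup.closure {x | ∃ s, s < ℓ ∧ x = d s} → y ∈ S) :
    ∃ s < ℓ, d s ∉ stabilizer G S ∧ ∀ t < s, d t ∈ stabilizer G S := by
  obtain ⟨_, ⟨s, hsℓ, rfl⟩, hs⟩ := exists_notMem_stabilizer_of_not_forall hS
  have hex : ∃ s, s < ℓ ∧ d s ∉ stabilizer G S := ⟨s, hsℓ, hs⟩
  refine ⟨Nat.find hex, (Nat.find_spec hex).1, (Nat.find_spec hex).2, fun t ht => ?_⟩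
  by_contra h
  exact Nat.find_min hex ht ⟨ht.trans (Nat.find_spec hex).1, h⟩

end Stabilizer

theorem ZMod.exists_mem_val_add_card_le {n : ℕ} [NeZero n] {C : Finset (ZMod n)}
    (hC : C.Nonempty) : ∃ q ∈ C, q.val + #C ≤ n := by
  obtain ⟨q, hqC, hmin⟩ := exists_min_image C ZMod.val hC
  have hsub : C.image ZMod.val ⊆ Ico q.val n := fun v hv => by
    obtain ⟨x, hx, rfl⟩ := mem_image.1 hv
    exact mem_Ico.2 ⟨hmin x hx, ZMod.val_lt x⟩
  have hcard := card_le_card hsub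
  rw [card_image_of_injective C (ZMod.val_injective n), Nat.card_Ico] at hcard
  exact ⟨q, hqC, by have := ZMod.val_lt q; omega⟩

theorem ZMod.exists_notMem_add_mem_of_not_forall {n : ℕ} [NeZero n] {S : Finset (ZMod n)}
    {d : ℕ → ZMod n} {ℓ : ℕ} (hd0 : ∀ t, d t ≠ 0) (hdinj : Set.InjOn d (Set.Iio ℓ))
    (hS : ¬ ∀ x ∈ S, ∀ y,
      y - x ∈ AddSubgroup.closure {x | ∃ s, s < ℓ ∧ x = d s} → y ∈ S) :
    ∃ s < ℓ, ∃ q : ZMod n, q ∉ S ∧ d s + q ∈ S ∧ s + 1 + q.val ≤ n := by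
  obtain ⟨s, hsℓ, hs, hperiod⟩ := exists_min_notMem_stabilizer hS
  obtain ⟨q₀, hq₀S, hq₀d⟩ := exists_notMem_add_mem_of_notMem_stabilizer hs
  set H := insert 0 ((range s).image d)
  have hH : ∀ h ∈ H, h ∈ AddAction.stabilizer (ZMod n) S := by
    simp only [H, mem_insert, mem_image, mem_range]
    rintro h (rfl | ⟨t, ht, rfl⟩)
    exacts [zero_mem _, hperiod t ht]
  have hHcard : #H = s + 1 := by
    rw [card_insert_of_notMem (by simpa [H] using fun t _ => hd0 t),
      card_image_of_injOn (hdinj.mono fun t ht => by simp at ht ⊢; omega), card_range]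
  obtain ⟨q, hq, hqn⟩ :=
    ZMod.exists_mem_val_add_card_le (C := H.image (· + q₀)) (by simp [H])
  obtain ⟨h, hhH, rfl⟩ := mem_image.1 hq
  refine ⟨s, hsℓ, h + q₀, ?_, ?_, ?_⟩
  · exact (add_mem_iff_of_mem_stabilizer (hH h hhH) q₀).not.2 hq₀S
  · rw [add_left_comm]
    exact (add_mem_iff_of_mem_stabilizer (hH h hhH) _).2 hq₀d
  · rwa [card_image_of_injective _ (add_left_injective q₀), hHcard, add_comm] at hqn

theorem actAB_replicate_append {n : ℕ} (a : ZMod n → ZMod n) (s q : ℕ) (p : ZMod n) :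
    actAB n a p (List.replicate s true ++ List.replicate q false) = a^[s] p + q := by
  induction s generalizing p with
  | zero =>
    simp only [actAB, List.replicate_zero, List.nil_append, Function.iterate_zero, id]
    induction q generalizing p with
    | zero => simp
    | succ q ih => simp [List.replicate_succ, ih, add_assoc, add_comm (1 : ZMod n)]
  | succ s ih => simpa [actAB, List.replicate_succ] using ih (a p)

theorem stmt7_general (n : ℕ) (hn : 2 ≤ n) (a : ZMod n → ZMod n)
    (hexcl : Set.range a = {(0 : ZMod n)}ᶜ)
    (r : ZMod n) (hr : r ≠ 0) (hra : a r = a 0)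
    (ℓ : ℕ)
    (hℓmin : ∀ m : ℕ, 1 ≤ m → a^[m - 1] (a 0) = r → ℓ ≤ m)
    (S : Finset (ZMod n))
    -- `S` is not a union of cosets of the orbit subgroup `H₀`
    (hSnc : ¬ ∀ x ∈ S, ∀ y : ZMod n,
      y - x ∈ AddSubgroup.closure {x : ZMod n | ∃ s : ℕ, s < ℓ ∧ x = a^[s] (a 0)} →
        y ∈ S) :
    ∃ w : List Bool, w.length ≤ n ∧
      (∃ s q : ℕ, s < ℓ ∧ s + 1 + q ≤ n ∧
        w = List.replicate (s + 1) true ++ List.replicate q false) ∧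
      ∃ P : Finset (ZMod n), S.card < P.card ∧
        P.image (fun p => actAB n a p w) = S := by
  have : NeZero n := ⟨by omega⟩
  obtain ⟨s, hsℓ, q, hqS, hdq, hsq⟩ := ZMod.exists_notMem_add_mem_of_not_forall
    (iterate_apply_apply_ne_of_range_eq_compl hexcl)
    (injOn_iterate_apply_apply hexcl hr hra hℓmin) hSnc
  set T := S.image (· - q)
  have hT0 : 0 ∉ T := by simpa [T, sub_eq_zero] using hqS
  have hTd : a^[s] (a 0) ∈ T := mem_image.2 ⟨_, hdq, add_sub_cancel_right _ _⟩
  have hTS : T.image (· + q) = S := by simp [T, image_image, Function.comp_def]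
  have hcard := card_filter_iterate_apply_mem_add hexcl hr hra s T
  rw [if_neg hT0, if_pos hTd, card_image_of_injective _ sub_left_injective] at hcard
  refine ⟨_, by simp; omega, ⟨s, q.val, hsℓ, hsq, rfl⟩,
    univ.filter (a^[s + 1] · ∈ T), by omega, ?_⟩
  simp only [actAB_replicate_append, ZMod.natCast_zmod_val]
  calc (univ.filter (a^[s + 1] · ∈ T)).image (fun p => a^[s + 1] p + q)
      = ((univ.filter (a^[s + 1] · ∈ T)).image a^[s + 1]).image (· + q) := by
        rw [image_image]; rfl
    _ = S := by rw [image_filter_iterate_apply_mem hexcl hr hra (s + 1) hT0, hTS]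

/-- Proposition: in a standardized DFA `⟨ℤₙ, {a, b}⟩` with orbit subgroup `H₀`, every
non-empty subset that is not a union of `H₀`-cosets is `n`-expandable, by a word of
the form `a^(s+1) b^q` with `s + 1 + q ≤ n`. -/
theorem stmt7 (n : ℕ) (hn : 2 ≤ n) (a : ZMod n → ZMod n)
    (hexcl : Set.range a = {(0 : ZMod n)}ᶜ)
    (hdupl : ∀ p : ZMod n,
      (∃ q₁ q₂ : ZMod n, q₁ ≠ q₂ ∧ a q₁ = p ∧ a q₂ = p) ↔ p = a 0)
    (r : ZMod n) (hr : r ≠ 0) (hra : a r = a 0)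
    (ℓ : ℕ) (hℓ1 : 1 ≤ ℓ) (hℓr : a^[ℓ - 1] (a 0) = r)
    (hℓmin : ∀ m : ℕ, 1 ≤ m → a^[m - 1] (a 0) = r → ℓ ≤ m)
    (S : Finset (ZMod n)) (hS : S.Nonempty)
    -- `S` is not a union of cosets of the orbit subgroup `H₀`
    (hSnc : ¬ ∀ x ∈ S, ∀ y : ZMod n,
      y - x ∈ AddSubgroup.closure {x : ZMod n | ∃ s : ℕ, s < ℓ ∧ x = a^[s] (a 0)} →
        y ∈ S) :
    ∃ w : List Bool, w.length ≤ n ∧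
      (∃ s q : ℕ, s < ℓ ∧ s + 1 + q ≤ n ∧
        w = List.replicate (s + 1) true ++ List.replicate q false) ∧
      ∃ P : Finset (ZMod n), S.card < P.card ∧
        P.image (fun p => actAB n a p w) = S :=
  stmt7_general n hn a hexcl r hr hra ℓ hℓmin S hSnc
end

section
/- Consider the DFA A = ⟨ℤ₆, {a, b}⟩ where b acts as q ↦ q ⊕ 1 mod 6 and a acts by: 0·a = 3, 1·a = 2, 2·a = 1, and q·a = q for q ∈ {3, 4, 5}. Then A is synchronizing — the word a b⁴ a b (a b²)² a b a maps ℤ₆ to a singleton — but A is not completely reachable: the subset {0, 1, 3, 4} is not equal to ℤ₆·w for any word w. -/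
/-!
Reset word: a direct computation shows `ℤ₆ · a b⁴ a b (a b²)² a b a = {3}`.

Non-reachability: call `S ⊆ ℤ₆` a union of two cosets of `{0, 3}` if `|S| = 4` and `S + 3 = S`;
these are `{0,1,3,4}`, `{1,2,4,5}` and `{0,2,3,5}`. The property is reflected by both letters:
`b` is a translation, which commutes with `+ 3`; and since `0 ∉ ℤ₆ · a`, a set `S` with `S · a`
a union of two cosets has `S · a = {1,2,4,5}`, forcing `S = {1,2,4,5}`. As `ℤ₆` itself is not
such a union, no `ℤ₆ · w` is, while `{0,1,3,4}` is.
-/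

/-- The letter `a` of the 6-state DFA of Figure 7. -/
def aF : ZMod 6 → ZMod 6 := fun q =>
  if q = 0 then 3 else if q = 1 then 2 else if q = 2 then 1 else q

/-- The action of a word on a state: `true` is the letter `a`, `false` is the letter
`b : q ↦ q + 1`. -/
def actF (q : ZMod 6) (w : List Bool) : ZMod 6 :=
  w.foldl (fun p l => if l then aF p else p + 1) q

/-- The word `a b⁴ a b (a b²)² a b a`. -/
def wF : List Bool :=
  [true] ++ List.replicate 4 false ++ [true, false] ++
    ([true, false, false] ++ [true, false, false]) ++ [true, false, true]

theorem Finset.image_add_right_image_add_right_eq_iff {G : Type*} [AddCommGroup G]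
    [DecidableEq G] (S : Finset G) (c d : G) :
    (S.image (· + c)).image (· + d) = S.image (· + c) ↔ S.image (· + d) = S := by
  have hcomm : (S.image (· + c)).image (· + d) = (S.image (· + d)).image (· + c) := by
    simp only [Finset.image_image, Function.comp_def, add_right_comm]
  rw [hcomm, (Finset.image_injective (add_left_injective c)).eq_iff]

def IsUnionOfTwoCosets (S : Finset (ZMod 6)) : Prop :=
  S.card = 4 ∧ S.image (· + 3) = S

instance : DecidablePred IsUnionOfTwoCosets :=
  fun S => inferInstanceAs (Decidable (S.card = 4 ∧ S.image (· + 3) = S))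

theorem IsUnionOfTwoCosets.of_image_add_one {S : Finset (ZMod 6)}
    (h : IsUnionOfTwoCosets (S.image (· + 1))) : IsUnionOfTwoCosets S := by
  obtain ⟨hcard, hinv⟩ := h
  refine ⟨?_, (S.image_add_right_image_add_right_eq_iff 1 3).mp hinv⟩
  rwa [Finset.card_image_of_injective S (add_left_injective 1)] at hcard

theorem IsUnionOfTwoCosets.of_image_aF {S : Finset (ZMod 6)}
    (h : IsUnionOfTwoCosets (S.image aF)) : IsUnionOfTwoCosets S := by
  revert S
  decide

theorem image_actF_append (w : List Bool) (l : Bool) :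
    Finset.univ.image (actF · (w ++ [l])) =
      (Finset.univ.image (actF · w)).image (fun p => if l then aF p else p + 1) := by
  simp only [actF, List.foldl_append, List.foldl_cons, List.foldl_nil, Finset.image_image]
  rfl

theorem not_isUnionOfTwoCosets_image_actF (w : List Bool) :
    ¬ IsUnionOfTwoCosets (Finset.univ.image (actF · w)) := by
  induction w using List.reverseRecOn with
  | nil => simp [IsUnionOfTwoCosets, actF]
  | append_singleton w l ih =>
    rw [image_actF_append]
    cases l
    · exact fun h => ih h.of_image_add_one
    · exact fun h => ih h.of_image_aF

/-- The 6-state standardized DFA of Figure 7 is synchronizing — the word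
`a b⁴ a b (a b²)² a b a` is a reset word — but not completely reachable:
the subset `{0, 1, 3, 4}` is not reachable by any word. -/
theorem stmt19 :
    (∃ q₀ : ZMod 6, Finset.univ.image (fun q => actF q wF) = {q₀}) ∧
    ¬ ∃ w : List Bool, Finset.univ.image (fun q => actF q w) =
        ({0, 1, 3, 4} : Finset (ZMod 6)) := by
  refine ⟨⟨3, by decide⟩, ?_⟩
  rintro ⟨w, hw⟩
  have hunion : IsUnionOfTwoCosets {0, 1, 3, 4} := by decide
  exact not_isUnionOfTwoCosets_image_actF w (hw ▸ hunion)
end
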